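/- arXiv:1901.07693 — 6 statements merged into one kernel-verified Lean document; each statement's English description precedes it below -/
import Mathlib

section
/- For any symmetric positive definite matrices Σ̂ and Σ₀ of the same size, tr(Σ̂⁻¹ Σ₀ Σ̂⁻¹) ≥ tr(Σ̂⁻¹)² / tr(Σ₀⁻¹). -/
/-!
Write `S₀ = Bᵀ B` and apply Cauchy–Schwarz for the Frobenius inner product `⟨X, Y⟩ = tr (Xᵀ Y)`
to `X = B Σ₀⁻¹` and `Y = B Σ̂⁻¹`: then `⟨X, Y⟩ = tr Σ̂⁻¹`, `⟨X, X⟩ = tr Σ₀⁻¹` and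
`⟨Y, Y⟩ = tr (Σ̂⁻¹ Σ₀ Σ̂⁻¹)`.
-/

open Matrix
open scoped MatrixOrder

namespace Matrix

variable {m n R : Type*} [Fintype m] [Fintype n]

theorem trace_transpose_mul_eq_sum [CommSemiring R] (X Y : Matrix m n R) :
    (Xᵀ * Y).trace = ∑ p : n × m, X p.2 p.1 * Y p.2 p.1 := by
  simp only [trace, diag_apply, mul_apply, transpose_apply, Fintype.sum_prod_type]

theorem sq_trace_transpose_mul_le [CommRing R] [LinearOrder R] [IsStrictOrderedRing R]
    (X Y : Matrix m n R) :
    (Xᵀ * Y).trace ^ 2 ≤ (Xᵀ * X).trace * (Yᵀ * Y).trace := by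
  simp only [trace_transpose_mul_eq_sum, ← sq]
  exact Finset.sum_mul_sq_le_sq_mul_sq _ _ _

theorem PosSemidef.exists_eq_transpose_mul_self [DecidableEq m] {S : Matrix m m ℝ}
    (hS : S.PosSemidef) : ∃ B : Matrix m m ℝ, S = Bᵀ * B := by
  refine ⟨CFC.sqrt S, ?_⟩
  rw [← conjTranspose_eq_transpose_of_trivial, ← star_eq_conjTranspose,
    (CFC.sqrt_nonneg S).isSelfAdjoint.star_eq, CFC.sqrt_mul_sqrt_self S hS.nonneg]

theorem trace_transpose_mul_mul_nonneg {S : Matrix m m ℝ} (hS : S.PosSemidef)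
    (X : Matrix m n ℝ) : 0 ≤ (Xᵀ * S * X).trace := by
  simpa only [conjTranspose_eq_transpose_of_trivial] using
    (hS.conjTranspose_mul_mul_same X).trace_nonneg

theorem sq_trace_transpose_mul_mul_le [DecidableEq m] {S : Matrix m m ℝ} (hS : S.PosSemidef)
    (X Y : Matrix m n ℝ) :
    (Xᵀ * S * Y).trace ^ 2 ≤ (Xᵀ * S * X).trace * (Yᵀ * S * Y).trace := by
  obtain ⟨B, rfl⟩ := hS.exists_eq_transpose_mul_self
  have hfactor (Z W : Matrix m n ℝ) : Zᵀ * (Bᵀ * B) * W = (B * Z)ᵀ * (B * W) := by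
    simp only [transpose_mul, Matrix.mul_assoc]
  simpa only [hfactor] using sq_trace_transpose_mul_le (B * X) (B * Y)

end Matrix

theorem trace_inv_quadratic_bound_general {d : ℕ} (Shat S0 : Matrix (Fin d) (Fin d) ℝ)
    (h1s : Shat.IsSymm) (h2 : S0.PosDef) (h2s : S0.IsSymm) :
    (Shat⁻¹ * S0 * Shat⁻¹).trace ≥ ((Shat⁻¹).trace) ^ 2 / (S0⁻¹).trace := by
  have hShat_inv : (Shat⁻¹)ᵀ = Shat⁻¹ := by rw [transpose_nonsing_inv, h1s]
  have hS0_inv : (S0⁻¹)ᵀ = S0⁻¹ := by rw [transpose_nonsing_inv, h2s]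
  have hcancel : S0⁻¹ * S0 = 1 := nonsing_inv_mul S0 ((isUnit_iff_isUnit_det S0).mp h2.isUnit)
  have hcs := sq_trace_transpose_mul_mul_le h2.posSemidef S0⁻¹ Shat⁻¹
  have htr_S0_inv := trace_transpose_mul_mul_nonneg h2.posSemidef S0⁻¹
  have htr_quad := trace_transpose_mul_mul_nonneg h2.posSemidef Shat⁻¹
  simp only [hS0_inv, hShat_inv, hcancel, Matrix.one_mul] at hcs htr_S0_inv htr_quad
  exact div_le_of_le_mul₀ htr_S0_inv htr_quad (by rwa [mul_comm])

theorem trace_inv_quadratic_bound {d : ℕ} (Shat S0 : Matrix (Fin d) (Fin d) ℝ)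
    (h1 : Shat.PosDef) (h1s : Shat.IsSymm) (h2 : S0.PosDef) (h2s : S0.IsSymm) :
    (Shat⁻¹ * S0 * Shat⁻¹).trace ≥ ((Shat⁻¹).trace) ^ 2 / (S0⁻¹).trace :=
  trace_inv_quadratic_bound_general Shat S0 h1s h2 h2s
end

section
/- For any symmetric positive definite d×d matrices Σ̂ and Σ₀, the inner product ⟨Σ̂ - Σ₀, Â - A₀⟩ ≥ 0, where Â = -2 tr(Σ̂⁻¹)^{-1/2} Σ̂⁻² and A₀ = -2 tr(Σ₀⁻¹)^{-1/2} Σ₀⁻², with equality if and only if tr(Σ̂⁻¹) = tr(Σ₀⁻¹) and both Cauchy–Schwarz inequalities tr(Σ̂⁻¹Σ₀Σ̂⁻¹) ≥ tr(Σ̂⁻¹)²/tr(Σ₀⁻¹), tr(Σ₀⁻¹Σ̂Σ₀⁻¹) ≥ tr(Σ₀⁻¹)²/tr(Σ̂⁻¹) are tight. -/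
/-!
Write `a = tr Σ̂⁻¹`, `b = tr Σ₀⁻¹`, `x = tr(Σ̂⁻¹Σ₀Σ̂⁻¹)`, `y = tr(Σ₀⁻¹Σ̂Σ₀⁻¹)`. Expanding the trace
gives `2 ((x - a)/√a + (y - b)/√b)`. Cauchy–Schwarz for the trace inner product yields
`x ≥ a²/b` and `y ≥ b²/a`, and replacing `x`, `y` by these bounds leaves
`(√a - √b)² (√a + √b)(a + √(ab) + b) / (ab) ≥ 0`.
-/

open Matrix

lemma Matrix.sq_trace_transpose_mul_le_s4 {m n : Type*} [Fintype m] [Fintype n]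
    (A B : Matrix m n ℝ) :
    (Aᵀ * B).trace ^ 2 ≤ (Aᵀ * A).trace * (Bᵀ * B).trace := by
  have trace_eq_sum : ∀ C D : Matrix m n ℝ,
      (Cᵀ * D).trace = ∑ p : m × n, C p.1 p.2 * D p.1 p.2 := by
    intro C D
    rw [Fintype.sum_prod_type, Finset.sum_comm]
    rfl
  simp only [trace_eq_sum, ← sq]
  exact Finset.sum_mul_sq_le_sq_mul_sq _ _ _

open scoped MatrixOrder in
/-- Cauchy–Schwarz for `⟨S^{-1/2}, S^{1/2} P⟩`. -/
lemma Matrix.PosDef.sq_trace_le_trace_inv_mul {n : Type*} [Fintype n] [DecidableEq n]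
    {S : Matrix n n ℝ} (hS : S.PosDef) (P : Matrix n n ℝ) :
    P.trace ^ 2 ≤ (S⁻¹).trace * (Pᵀ * S * P).trace := by
  set R := CFC.sqrt S
  have hRR : R * R = S := CFC.sqrt_mul_sqrt_self S hS.posSemidef.nonneg
  have hRsymm : Rᵀ = R := (CFC.sqrt_nonneg S).posSemidef.1
  have hR : IsUnit R.det := by
    refine isUnit_of_mul_isUnit_left (y := R.det) ?_
    rw [← det_mul, hRR]
    exact (isUnit_iff_isUnit_det S).mp hS.isUnit
  have hRinvT : (R⁻¹)ᵀ = R⁻¹ := by rw [transpose_nonsing_inv, hRsymm]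
  have hP : (R⁻¹)ᵀ * (R * P) = P := by
    rw [hRinvT, ← Matrix.mul_assoc, nonsing_inv_mul R hR, Matrix.one_mul]
  have hSinv : (R⁻¹)ᵀ * R⁻¹ = S⁻¹ := by rw [hRinvT, ← mul_inv_rev, hRR]
  have hPSP : (R * P)ᵀ * (R * P) = Pᵀ * S * P := by
    rw [transpose_mul, hRsymm, ← hRR, Matrix.mul_assoc, Matrix.mul_assoc, Matrix.mul_assoc]
  simpa only [hP, hSinv, hPSP] using sq_trace_transpose_mul_le_s4 R⁻¹ (R * P)

lemma Matrix.trace_transpose_sub_mul_smul_inv_mul_inv_sub {n R : Type*} [Fintype n]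
    [DecidableEq n] [CommRing R] {A B : Matrix n n R} (hA : IsUnit A.det) (hB : IsUnit B.det)
    (hAs : A.IsSymm) (hBs : B.IsSymm) (c e : R) :
    ((A - B)ᵀ * (c • (A⁻¹ * A⁻¹) - e • (B⁻¹ * B⁻¹))).trace =
      c * ((A⁻¹).trace - (A⁻¹ * B * A⁻¹).trace) + e * ((B⁻¹).trace - (B⁻¹ * A * B⁻¹).trace) := by
  have hAA : (A * (A⁻¹ * A⁻¹)).trace = (A⁻¹).trace := by
    rw [← Matrix.mul_assoc, mul_nonsing_inv A hA, Matrix.one_mul]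
  have hBB : (B * (B⁻¹ * B⁻¹)).trace = (B⁻¹).trace := by
    rw [← Matrix.mul_assoc, mul_nonsing_inv B hB, Matrix.one_mul]
  have hBA : (B * (A⁻¹ * A⁻¹)).trace = (A⁻¹ * B * A⁻¹).trace := by
    rw [← Matrix.mul_assoc, trace_mul_cycle]
  have hAB : (A * (B⁻¹ * B⁻¹)).trace = (B⁻¹ * A * B⁻¹).trace := by
    rw [← Matrix.mul_assoc, trace_mul_cycle]
  rw [transpose_sub, hAs.eq, hBs.eq]
  simp only [Matrix.sub_mul, Matrix.mul_sub, Matrix.mul_smul, trace_sub, trace_smul, smul_eq_mul,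
    hAA, hBB, hBA, hAB]
  ring

lemma sub_div_sqrt_add_sub_div_sqrt_nonneg_and_eq_zero_iff {a b x y : ℝ} (ha : 0 < a)
    (hb : 0 < b) (hx : a ^ 2 ≤ b * x) (hy : b ^ 2 ≤ a * y) :
    0 ≤ (x - a) / √a + (y - b) / √b ∧
      ((x - a) / √a + (y - b) / √b = 0 ↔ a = b ∧ x = a ^ 2 / b ∧ y = b ^ 2 / a) := by
  obtain ⟨u, hu, rfl⟩ : ∃ u, 0 < u ∧ a = u ^ 2 :=
    ⟨√a, Real.sqrt_pos.2 ha, (Real.sq_sqrt ha.le).symm⟩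
  obtain ⟨v, hv, rfl⟩ : ∃ v, 0 < v ∧ b = v ^ 2 :=
    ⟨√b, Real.sqrt_pos.2 hb, (Real.sq_sqrt hb.le).symm⟩
  rw [Real.sqrt_sq hu.le, Real.sqrt_sq hv.le]
  have hx' : 0 ≤ (x - (u ^ 2) ^ 2 / v ^ 2) / u :=
    div_nonneg (sub_nonneg.2 ((div_le_iff₀' (by positivity)).2 hx)) hu.le
  have hy' : 0 ≤ (y - (v ^ 2) ^ 2 / u ^ 2) / v :=
    div_nonneg (sub_nonneg.2 ((div_le_iff₀' (by positivity)).2 hy)) hv.le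
  set w := (u + v) * (u ^ 2 + u * v + v ^ 2) / (u ^ 2 * v ^ 2) with hw_def
  have hw : 0 < w := by positivity
  have hdecomp : (x - u ^ 2) / u + (y - v ^ 2) / v =
      (x - (u ^ 2) ^ 2 / v ^ 2) / u + (y - (v ^ 2) ^ 2 / u ^ 2) / v + (u - v) ^ 2 * w := by
    rw [hw_def]
    field_simp
    ring
  rw [hdecomp, add_eq_zero_iff_of_nonneg (add_nonneg hx' hy') (by positivity),
    add_eq_zero_iff_of_nonneg hx' hy', div_eq_zero_iff, div_eq_zero_iff, mul_eq_zero,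
    sq_eq_zero_iff, sub_eq_zero, sub_eq_zero, sub_eq_zero,
    pow_left_inj₀ hu.le hv.le two_ne_zero]
  refine ⟨by positivity, ?_⟩
  simp only [hu.ne', hv.ne', hw.ne', or_false]
  tauto

theorem inner_diff_nonneg_general {d : ℕ} (Shat S0 : Matrix (Fin d) (Fin d) ℝ)
    (h1 : Shat.PosDef) (h2 : S0.PosDef) :
    letI Ahat : Matrix (Fin d) (Fin d) ℝ :=
      (-2 / Real.sqrt ((Shat⁻¹).trace)) • (Shat⁻¹ * Shat⁻¹)
    letI A0 : Matrix (Fin d) (Fin d) ℝ :=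
      (-2 / Real.sqrt ((S0⁻¹).trace)) • (S0⁻¹ * S0⁻¹)
    ((Shat - S0)ᵀ * (Ahat - A0)).trace ≥ 0 ∧
      (((Shat - S0)ᵀ * (Ahat - A0)).trace = 0 ↔
        ((Shat⁻¹).trace = (S0⁻¹).trace ∧
          (Shat⁻¹ * S0 * Shat⁻¹).trace = ((Shat⁻¹).trace) ^ 2 / (S0⁻¹).trace ∧
          (S0⁻¹ * Shat * S0⁻¹).trace = ((S0⁻¹).trace) ^ 2 / (Shat⁻¹).trace)) := by
  rcases isEmpty_or_nonempty (Fin d) with hd | hd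
  · simp [Matrix.trace]
  have isSymm_inv {S : Matrix (Fin d) (Fin d) ℝ} (hS : S.PosDef) : (S⁻¹).IsSymm :=
    isHermitian_iff_isSymm.mp hS.inv.isHermitian
  have hx := h2.sq_trace_le_trace_inv_mul Shat⁻¹
  have hy := h1.sq_trace_le_trace_inv_mul S0⁻¹
  rw [(isSymm_inv h1).eq] at hx
  rw [(isSymm_inv h2).eq] at hy
  obtain ⟨hnonneg, hzero⟩ :=
    sub_div_sqrt_add_sub_div_sqrt_nonneg_and_eq_zero_iff h1.inv.trace_pos h2.inv.trace_pos hx hy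
  simp only [trace_transpose_sub_mul_smul_inv_mul_inv_sub ((isUnit_iff_isUnit_det _).mp h1.isUnit)
    ((isUnit_iff_isUnit_det _).mp h2.isUnit) (isHermitian_iff_isSymm.mp h1.isHermitian)
    (isHermitian_iff_isSymm.mp h2.isHermitian)]
  set a := (Shat⁻¹).trace
  set b := (S0⁻¹).trace
  set x := (Shat⁻¹ * S0 * Shat⁻¹).trace
  set y := (S0⁻¹ * Shat * S0⁻¹).trace
  rw [show -2 / √a * (a - x) + -2 / √b * (b - y) = 2 * ((x - a) / √a + (y - b) / √b) by ring]
  simp only [ge_iff_le, mul_eq_zero, two_ne_zero, false_or, hzero, and_true]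
  exact mul_nonneg zero_le_two hnonneg

theorem inner_diff_nonneg {d : ℕ} (Shat S0 : Matrix (Fin d) (Fin d) ℝ)
    (h1 : Shat.PosDef) (h1s : Shat.IsSymm) (h2 : S0.PosDef) (h2s : S0.IsSymm) :
    letI Ahat : Matrix (Fin d) (Fin d) ℝ :=
      (-2 / Real.sqrt ((Shat⁻¹).trace)) • (Shat⁻¹ * Shat⁻¹)
    letI A0 : Matrix (Fin d) (Fin d) ℝ :=
      (-2 / Real.sqrt ((S0⁻¹).trace)) • (S0⁻¹ * S0⁻¹)
    ((Shat - S0)ᵀ * (Ahat - A0)).trace ≥ 0 ∧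
      (((Shat - S0)ᵀ * (Ahat - A0)).trace = 0 ↔
        ((Shat⁻¹).trace = (S0⁻¹).trace ∧
          (Shat⁻¹ * S0 * Shat⁻¹).trace = ((Shat⁻¹).trace) ^ 2 / (S0⁻¹).trace ∧
          (S0⁻¹ * Shat * S0⁻¹).trace = ((S0⁻¹).trace) ^ 2 / (Shat⁻¹).trace)) :=
  inner_diff_nonneg_general Shat S0 h1 h2
end

section
/- For any symmetric positive definite matrices Σ̂ and Σ₀, 2(-√tr(Σ̂⁻¹) - √tr(Σ₀⁻¹) + tr(Σ̂⁻¹Σ₀Σ̂⁻¹)/√tr(Σ̂⁻¹) + tr(Σ₀⁻¹Σ̂Σ₀⁻¹)/√tr(Σ₀⁻¹)) ≥ 2·g(√tr(Σ̂⁻¹), √tr(Σ₀⁻¹)) ≥ 0, where g(a,b) = -a - b + b³/a² + a³/b². -/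
open Matrix Real

/-!
Cauchy–Schwarz for the semi-inner product `⟪X, Y⟫ = tr (Y Q Xᴴ)` on matrices, applied to `Q⁻¹`
and `P`, gives `tr P ² ≤ tr (P Q P) · tr Q⁻¹`. With `a² = tr Σ̂⁻¹` and `b² = tr Σ₀⁻¹` this reads
`a⁴ ≤ tr (Σ̂⁻¹ Σ₀ Σ̂⁻¹) · b²` and symmetrically, i.e. each quotient in the left-hand side dominates
the matching cube term of `g`. Finally `g(a, b) ≥ 0` is `a⁵ + b⁵ ≥ a²b²(a + b)`, which is
`(a² - b²)(a³ - b³) ≥ 0`.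
-/

lemma Matrix.PosSemidef.trace_mul_mul_conjTranspose_sq_le {n : Type*} [Fintype n]
    {Q : Matrix n n ℝ} (hQ : Q.PosSemidef) (X Y : Matrix n n ℝ) :
    (Y * Q * Xᴴ).trace ^ 2 ≤ (X * Q * Xᴴ).trace * (Y * Q * Yᴴ).trace := by
  let := Q.toMatrixSeminormedAddCommGroup hQ
  let := Q.toMatrixInnerProductSpace hQ
  rw [sq]
  exact real_inner_mul_inner_self_le X Y

lemma Matrix.PosDef.trace_sq_le_trace_mul_mul_mul_trace_inv {n : Type*} [Fintype n]
    [DecidableEq n] {P Q : Matrix n n ℝ} (hP : P.IsHermitian) (hQ : Q.PosDef) :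
    P.trace ^ 2 ≤ (P * Q * P).trace * Q⁻¹.trace := by
  have hQQinv : Q * Q⁻¹ = 1 := mul_nonsing_inv Q ((isUnit_iff_isUnit_det Q).mp hQ.isUnit)
  have h := hQ.posSemidef.trace_mul_mul_conjTranspose_sq_le Q⁻¹ P
  rwa [hP.eq, hQ.inv.isHermitian.eq, mul_assoc, hQQinv, mul_one, mul_assoc Q⁻¹, hQQinv,
    mul_one, mul_comm] at h

lemma cube_div_sq_le_div {a b u : ℝ} (ha : 0 < a) (hb : 0 < b) (h : a ^ 4 ≤ u * b ^ 2) :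
    a ^ 3 / b ^ 2 ≤ u / a := by
  rw [div_le_div_iff₀ (by positivity) ha]
  linarith

lemma add_le_cube_div_sq_add_cube_div_sq {a b : ℝ} (ha : 0 < a) (hb : 0 < b) :
    a + b ≤ b ^ 3 / a ^ 2 + a ^ 3 / b ^ 2 := by
  have hfactor : 0 ≤ (a ^ 2 - b ^ 2) * (a ^ 3 - b ^ 3) := by
    rcases le_total a b with h | h
    · exact mul_nonneg_of_nonpos_of_nonpos (by nlinarith)
        (by nlinarith [pow_le_pow_left₀ ha.le h 3])
    · exact mul_nonneg (by nlinarith) (by nlinarith [pow_le_pow_left₀ hb.le h 3])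
  rw [div_add_div _ _ (by positivity) (by positivity), le_div_iff₀ (by positivity)]
  nlinarith

lemma neg_add_cube_div_sq_nonneg_and_le {a b u v : ℝ} (ha : 0 ≤ a) (hb : 0 ≤ b)
    (hu : a ^ 4 ≤ u * b ^ 2) (hv : b ^ 4 ≤ v * a ^ 2) :
    -a - b + b ^ 3 / a ^ 2 + a ^ 3 / b ^ 2 ≤ -a - b + u / a + v / b ∧
      0 ≤ -a - b + b ^ 3 / a ^ 2 + a ^ 3 / b ^ 2 := by
  rcases ha.eq_or_lt with rfl | ha
  -- the degenerate case `a = b = 0` (dimension zero), where every quotient is the junk `x / 0 = 0`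
  · obtain rfl : b = 0 := pow_eq_zero_iff (n := 4) (by norm_num) |>.mp
      (le_antisymm (by simpa using hv) (by positivity))
    simp
  have hb : 0 < b := by
    contrapose! hu
    obtain rfl := le_antisymm hu hb
    simpa using pow_pos ha 4
  exact ⟨by linarith [cube_div_sq_le_div ha hb hu, cube_div_sq_le_div hb ha hv],
    by linarith [add_le_cube_div_sq_add_cube_div_sq ha hb]⟩

theorem trace_chain_ineq_general {d : ℕ} (Shat S0 : Matrix (Fin d) (Fin d) ℝ)
    (h1 : Shat.PosDef) (h2 : S0.PosDef) :
    letI g : ℝ → ℝ → ℝ := fun a b => -a - b + b ^ 3 / a ^ 2 + a ^ 3 / b ^ 2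
    2 * (-Real.sqrt ((Shat⁻¹).trace) - Real.sqrt ((S0⁻¹).trace)
        + (Shat⁻¹ * S0 * Shat⁻¹).trace / Real.sqrt ((Shat⁻¹).trace)
        + (S0⁻¹ * Shat * S0⁻¹).trace / Real.sqrt ((S0⁻¹).trace)) ≥
      2 * g (Real.sqrt ((Shat⁻¹).trace)) (Real.sqrt ((S0⁻¹).trace)) ∧
    2 * g (Real.sqrt ((Shat⁻¹).trace)) (Real.sqrt ((S0⁻¹).trace)) ≥ 0 := by
  dsimp only
  have ha : √(Shat⁻¹.trace) ^ 2 = Shat⁻¹.trace := sq_sqrt h1.inv.posSemidef.trace_nonneg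
  have hb : √(S0⁻¹.trace) ^ 2 = S0⁻¹.trace := sq_sqrt h2.inv.posSemidef.trace_nonneg
  have hu := h2.trace_sq_le_trace_mul_mul_mul_trace_inv h1.inv.isHermitian
  have hv := h1.trace_sq_le_trace_mul_mul_mul_trace_inv h2.inv.isHermitian
  rw [← ha, ← hb, ← pow_mul] at hu hv
  obtain ⟨hle, hnonneg⟩ :=
    neg_add_cube_div_sq_nonneg_and_le (sqrt_nonneg _) (sqrt_nonneg _) hu hv
  exact ⟨by linarith, by linarith⟩

theorem trace_chain_ineq {d : ℕ} (Shat S0 : Matrix (Fin d) (Fin d) ℝ)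
    (h1 : Shat.PosDef) (h1s : Shat.IsSymm) (h2 : S0.PosDef) (h2s : S0.IsSymm) :
    letI g : ℝ → ℝ → ℝ := fun a b => -a - b + b ^ 3 / a ^ 2 + a ^ 3 / b ^ 2
    2 * (-Real.sqrt ((Shat⁻¹).trace) - Real.sqrt ((S0⁻¹).trace)
        + (Shat⁻¹ * S0 * Shat⁻¹).trace / Real.sqrt ((Shat⁻¹).trace)
        + (S0⁻¹ * Shat * S0⁻¹).trace / Real.sqrt ((S0⁻¹).trace)) ≥
      2 * g (Real.sqrt ((Shat⁻¹).trace)) (Real.sqrt ((S0⁻¹).trace)) ∧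
    2 * g (Real.sqrt ((Shat⁻¹).trace)) (Real.sqrt ((S0⁻¹).trace)) ≥ 0 :=
  trace_chain_ineq_general Shat S0 h1 h2
end

section
/- For any z > 0, the quantity 4z / (√(z² + 4z)·((1+z)√(z²+4z) + z² + 3z)) lies in the interval [2z/(z+2)³, 2/z²]. -/
theorem deriv_x_gamma_bounds (z : ℝ) (hz : 0 < z) :
    4 * z / (Real.sqrt (z ^ 2 + 4 * z) *
        ((1 + z) * Real.sqrt (z ^ 2 + 4 * z) + z ^ 2 + 3 * z)) ∈
      Set.Icc (2 * z / (z + 2) ^ 3) (2 / z ^ 2) := by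
  set s := Real.sqrt (z ^ 2 + 4 * z) with hs
  have h0 : (0:ℝ) ≤ z ^ 2 + 4 * z := by nlinarith
  have hs2 : s ^ 2 = z ^ 2 + 4 * z := Real.sq_sqrt h0
  have hsnn : 0 ≤ s := Real.sqrt_nonneg _
  have hspos : 0 < s := by nlinarith
  have hsle : s ≤ z + 2 := by nlinarith [sq_nonneg (s - (z + 2))]
  have hge : z ≤ s := by nlinarith [sq_nonneg (s - z)]
  have hD : 0 < s * ((1 + z) * s + z ^ 2 + 3 * z) := by positivity
  constructor
  · rw [div_le_div_iff₀ (by positivity) hD]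
    nlinarith [mul_nonneg (mul_nonneg hz.le (by linarith : (0:ℝ) ≤ z + 3)) (by linarith : (0:ℝ) ≤ z + 2 - s)]
  · rw [div_le_div_iff₀ hD (by positivity)]
    nlinarith [mul_nonneg (mul_nonneg hz.le (by linarith : (0:ℝ) ≤ z + 3)) (by linarith : (0:ℝ) ≤ s - z)]
end

section
/- Let λ₁,…,λ_d > 0 and ρ > 0, and let γ* > 0 satisfy (ρ² - ½Σᵢλᵢ)γ* - d + ½Σᵢ√(λᵢ²γ*² + 4λᵢγ*) = 0. Then ρ·γ* ≤ √(Σᵢ λᵢ⁻¹). -/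
/-!
Bounding each square root from below by `λᵢγ + 2 - 2/(λᵢγ)` turns the defining equation of `γ`
into `ρ²γ ≤ γ⁻¹ ∑ᵢ λᵢ⁻¹`: the terms `½ γ ∑ᵢ λᵢ` and `d` cancel exactly.
Multiplying by `γ` gives `(ργ)² ≤ ∑ᵢ λᵢ⁻¹`.
-/

open Finset

theorem Real.add_two_sub_two_div_le_sqrt {x : ℝ} (hx : 0 < x) :
    x + 2 - 2 / x ≤ √(x ^ 2 + 4 * x) := by
  rcases le_or_gt (x + 2 - 2 / x) 0 with hneg | hpos
  · exact hneg.trans (Real.sqrt_nonneg _)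
  -- `(x + 2 - 2/x)² = x² + 4x - 4(2x - 1)/x²`, and `x + 2 - 2/x > 0` forces `x > 1/2`.
  have hx_half : 1 / 2 < x := by
    by_contra! h
    have : 4 ≤ 2 / x := by rw [le_div_iff₀ hx]; linarith
    linarith
  have hsq : (x + 2 - 2 / x) ^ 2 = x ^ 2 + 4 * x - 4 * (2 * x - 1) / x ^ 2 := by
    field_simp
    ring
  rw [Real.le_sqrt' hpos, hsq]
  have : 0 ≤ 4 * (2 * x - 1) / x ^ 2 := by
    apply div_nonneg <;> nlinarith
  linarith

theorem le_sum_sqrt_sq_mul_sq_add_four_mul {ι : Type*} [Fintype ι] (l : ι → ℝ)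
    (hl : ∀ i, 0 < l i) {γ : ℝ} (hγ : 0 < γ) :
    γ * ∑ i, l i + 2 * Fintype.card ι - 2 / γ * ∑ i, (l i)⁻¹
      ≤ ∑ i, √(l i ^ 2 * γ ^ 2 + 4 * l i * γ) := by
  have hterm : ∀ i, l i * γ + 2 - 2 / γ * (l i)⁻¹ ≤ √(l i ^ 2 * γ ^ 2 + 4 * l i * γ) := by
    intro i
    have h := Real.add_two_sub_two_div_le_sqrt (mul_pos (hl i) hγ)
    have hl0 := (hl i).ne'
    convert h using 2
    · field_simp
    · ring
  calc γ * ∑ i, l i + 2 * Fintype.card ι - 2 / γ * ∑ i, (l i)⁻¹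
      = ∑ i, (l i * γ + 2 - 2 / γ * (l i)⁻¹) := by
        simp only [sum_sub_distrib, sum_add_distrib, ← mul_sum, ← sum_mul, sum_const,
          card_univ, nsmul_eq_mul]
        ring
    _ ≤ _ := sum_le_sum fun i _ => hterm i

theorem rho_gamma_bound_general {d : ℕ} (l : Fin d → ℝ) (hl : ∀ i, 0 < l i)
    (ρ γ : ℝ) (hγ : 0 < γ)
    (heq : (ρ ^ 2 - (1 / 2) * ∑ i, l i) * γ - d
        + (1 / 2) * ∑ i, Real.sqrt ((l i) ^ 2 * γ ^ 2 + 4 * l i * γ) = 0) :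
    ρ * γ ≤ Real.sqrt (∑ i, (l i)⁻¹) := by
  have hsum := le_sum_sqrt_sq_mul_sq_add_four_mul l hl hγ
  rw [Fintype.card_fin] at hsum
  have hργ : ρ ^ 2 * γ ≤ γ⁻¹ * ∑ i, (l i)⁻¹ := by
    rw [div_eq_mul_inv] at hsum
    linarith
  apply Real.le_sqrt_of_sq_le
  calc (ρ * γ) ^ 2 = γ * (ρ ^ 2 * γ) := by ring
    _ ≤ γ * (γ⁻¹ * ∑ i, (l i)⁻¹) := by gcongr
    _ = ∑ i, (l i)⁻¹ := by field_simp

theorem rho_gamma_bound {d : ℕ} (l : Fin d → ℝ) (hl : ∀ i, 0 < l i)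
    (ρ γ : ℝ) (hρ : 0 < ρ) (hγ : 0 < γ)
    (heq : (ρ ^ 2 - (1 / 2) * ∑ i, l i) * γ - d
        + (1 / 2) * ∑ i, Real.sqrt ((l i) ^ 2 * γ ^ 2 + 4 * l i * γ) = 0) :
    ρ * γ ≤ Real.sqrt (∑ i, (l i)⁻¹) :=
  rho_gamma_bound_general l hl ρ γ hγ heq
end

section
/- Let λ₁,…,λ_d > 0 and ρ > 0, and let γ* > 0 satisfy (ρ² - ½Σᵢλᵢ)γ* - d + ½Σᵢ√(λᵢ²γ*² + 4λᵢγ*) = 0. Then ρ²γ* = Σᵢ 2/(√(λᵢ²γ*² + 4λᵢγ*) + λᵢγ* + 2) ≥ Σᵢ 1/(λᵢγ* + 2) ≥ d/((maxᵢ λᵢ)γ* + 2). -/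
open Finset

/-- With `s = √(a² + 4a)` one has `(s + a + 2)(a + 2 - s) = (a + 2)² - s² = 4`. -/
lemma two_div_sqrt_sq_add_four_mul_add_add_two {a : ℝ} (ha : 0 ≤ a) :
    2 / (√(a ^ 2 + 4 * a) + a + 2) = (a + 2 - √(a ^ 2 + 4 * a)) / 2 := by
  have hsq : √(a ^ 2 + 4 * a) ^ 2 = a ^ 2 + 4 * a := Real.sq_sqrt (by positivity)
  have hden : 0 < √(a ^ 2 + 4 * a) + a + 2 := by positivity
  rw [div_eq_div_iff hden.ne' two_ne_zero]
  linear_combination hsq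

lemma sqrt_sq_add_four_mul_le {a : ℝ} (ha : 0 ≤ a) : √(a ^ 2 + 4 * a) ≤ a + 2 :=
  Real.sqrt_le_iff.mpr ⟨by positivity, by nlinarith⟩

lemma one_div_add_two_le_two_div_sqrt_sq_add_four_mul_add_add_two {a : ℝ} (ha : 0 ≤ a) :
    1 / (a + 2) ≤ 2 / (√(a ^ 2 + 4 * a) + a + 2) := by
  calc 1 / (a + 2) = 2 / (a + 2 + a + 2) := by field_simp; ring
    _ ≤ 2 / (√(a ^ 2 + 4 * a) + a + 2) := by gcongr; exact sqrt_sq_add_four_mul_le ha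

lemma card_div_le_sum_one_div {ι : Type*} (s : Finset ι) (f : ι → ℝ) {M : ℝ}
    (hf : ∀ i ∈ s, 0 < f i) (hM : ∀ i ∈ s, f i ≤ M) :
    #s / M ≤ ∑ i ∈ s, 1 / f i := by
  rw [div_eq_mul_one_div, ← nsmul_eq_mul]
  exact card_nsmul_le_sum _ _ _ fun i hi => one_div_le_one_div_of_le (hf i hi) (hM i hi)

theorem rho_sq_gamma_identity_general {d : ℕ} (l : Fin d → ℝ) (hl : ∀ i, 0 < l i)
    (lmax : ℝ) (hmax : IsGreatest (Set.range l) lmax)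
    (ρ γ : ℝ) (hγ : 0 < γ)
    (heq : (ρ ^ 2 - (1 / 2) * ∑ i, l i) * γ - d
        + (1 / 2) * ∑ i, Real.sqrt ((l i) ^ 2 * γ ^ 2 + 4 * l i * γ) = 0) :
    ρ ^ 2 * γ = ∑ i, 2 / (Real.sqrt ((l i) ^ 2 * γ ^ 2 + 4 * l i * γ) + l i * γ + 2) ∧
    ρ ^ 2 * γ ≥ ∑ i, 1 / (l i * γ + 2) ∧
    (∑ i, 1 / (l i * γ + 2)) ≥ d / (lmax * γ + 2) := by
  have ha : ∀ i, 0 ≤ l i * γ := fun i => (mul_pos (hl i) hγ).le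
  have hrad : ∀ i, l i ^ 2 * γ ^ 2 + 4 * l i * γ = (l i * γ) ^ 2 + 4 * (l i * γ) :=
    fun i => by ring
  simp only [hrad] at heq ⊢
  have hid : ρ ^ 2 * γ = ∑ i, 2 / (√((l i * γ) ^ 2 + 4 * (l i * γ)) + l i * γ + 2) := by
    simp only [two_div_sqrt_sq_add_four_mul_add_add_two (ha _), ← sum_div, sum_sub_distrib,
      sum_add_distrib, ← sum_mul, sum_const, card_univ, Fintype.card_fin, nsmul_eq_mul]
    linarith
  refine ⟨hid, ?_, ?_⟩
  · rw [hid]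
    exact sum_le_sum fun i _ => one_div_add_two_le_two_div_sqrt_sq_add_four_mul_add_add_two (ha i)
  · simpa using card_div_le_sum_one_div univ (fun i => l i * γ + 2)
      (fun i _ => by linarith [ha i])
      (fun i _ => by nlinarith [hmax.2 ⟨i, rfl⟩])

theorem rho_sq_gamma_identity {d : ℕ} (l : Fin d → ℝ) (hl : ∀ i, 0 < l i)
    (lmax : ℝ) (hmax : IsGreatest (Set.range l) lmax)
    (ρ γ : ℝ) (hρ : 0 < ρ) (hγ : 0 < γ)
    (heq : (ρ ^ 2 - (1 / 2) * ∑ i, l i) * γ - d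
        + (1 / 2) * ∑ i, Real.sqrt ((l i) ^ 2 * γ ^ 2 + 4 * l i * γ) = 0) :
    ρ ^ 2 * γ = ∑ i, 2 / (Real.sqrt ((l i) ^ 2 * γ ^ 2 + 4 * l i * γ) + l i * γ + 2) ∧
    ρ ^ 2 * γ ≥ ∑ i, 1 / (l i * γ + 2) ∧
    (∑ i, 1 / (l i * γ + 2)) ≥ d / (lmax * γ + 2) :=
  rho_sq_gamma_identity_general l hl lmax hmax ρ γ hγ heq
end
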